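/- arXiv:2511.03385 — 3 statements merged into one kernel-verified Lean document; each statement's English description precedes it below -/
import Mathlib

section
/- Let L be a finite lattice and C an antichain in L. Then C is Boolean if and only if for every subset S ⊆ C with |S| ≤ |C| − 2, the element ∨S equals the meet over all x ∈ C∖S of ∨(S ∪ {x}). -/
/-- An antichain `C` in a finite lattice is Boolean iff for every `S ⊆ C` with
`|S| ≤ |C| - 2`, the join of `S` equals the meet over `x ∈ C \ S` of the joins of `S ∪ {x}`. -/
theorem boolean_iff_local (L : Type*) [Lattice L] [OrderBot L] [OrderTop L] [Fintype L]
    [DecidableEq L] (C : Finset L) (hC : IsAntichain (· ≤ ·) (C : Set L)) :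
    (∀ S S' : Finset L, S ⊆ C → S' ⊆ C → S.sup id ⊓ S'.sup id = (S ∩ S').sup id) ↔
    (∀ S : Finset L, S ⊆ C → (S.card : ℤ) ≤ (C.card : ℤ) - 2 →
      S.sup id = (C \ S).inf fun x => (insert x S).sup id) := by
  constructor
  · intro h S hS hcard
    have hcards : S.card + 2 ≤ C.card := by
      have := Finset.card_le_card hS
      omega
    have h2 : 2 ≤ (C \ S).card := by
      rw [Finset.card_sdiff_of_subset hS]; omega
    have h2' : 1 < (C \ S).card := by omega
    obtain ⟨x, hx, y, hy, hxy⟩ := Finset.one_lt_card.mp h2'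
    apply le_antisymm
    · exact Finset.le_inf fun z hz => Finset.sup_mono (Finset.subset_insert z S)
    · have hxC := Finset.mem_sdiff.mp hx
      have hyC := Finset.mem_sdiff.mp hy
      have hle : (C \ S).inf (fun x => (insert x S).sup id) ≤
          (insert x S).sup id ⊓ (insert y S).sup id :=
        le_inf (Finset.inf_le hx) (Finset.inf_le hy)
      have heq : (insert x S) ∩ (insert y S) = S := by
        ext z
        simp only [Finset.mem_inter, Finset.mem_insert]
        constructor
        · rintro ⟨h1 | h1, h2 | h2⟩
          · exact absurd (h1 ▸ h2) hxy
          · exact h2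
          · exact h1
          · exact h1
        · exact fun hz => ⟨Or.inr hz, Or.inr hz⟩
      rw [h (insert x S) (insert y S) (Finset.insert_subset hxC.1 hS)
        (Finset.insert_subset hyC.1 hS), heq] at hle
      exact hle
  · intro h S S' hS hS'
    -- downward induction on |C| - |S ∩ S'|
    suffices key : ∀ n : ℕ, ∀ S S' : Finset L, S ⊆ C → S' ⊆ C →
        C.card - (S ∩ S').card ≤ n → S.sup id ⊓ S'.sup id = (S ∩ S').sup id by
      exact key C.card S S' hS hS' (Nat.sub_le _ _)
    intro n
    induction n with
    | zero =>
      intro S S' hS hS' hn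
      have hTC : S ∩ S' = C := Finset.eq_of_subset_of_card_le
        ((Finset.inter_subset_left).trans hS) (by omega)
      have h1 : S = C := Finset.Subset.antisymm hS (hTC ▸ Finset.inter_subset_left)
      have h2 : S' = C := Finset.Subset.antisymm hS' (hTC ▸ Finset.inter_subset_right)
      rw [h1, h2, Finset.inter_self, inf_idem]
    | succ n ih =>
      intro S S' hS hS' hn
      by_cases hss : S ⊆ S'
      · rw [Finset.inter_eq_left.mpr hss]
        exact inf_eq_left.mpr (Finset.sup_mono hss)
      by_cases hss' : S' ⊆ S
      · rw [Finset.inter_eq_right.mpr hss']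
        exact inf_eq_right.mpr (Finset.sup_mono hss')
      obtain ⟨a, haS, haS'⟩ := Finset.not_subset.mp hss
      obtain ⟨b, hbS', hbS⟩ := Finset.not_subset.mp hss'
      have hab : a ≠ b := fun hab => haS' (hab ▸ hbS')
      have haT : a ∉ S ∩ S' := fun hmem => haS' (Finset.mem_inter.mp hmem).2
      have hbT : b ∉ S ∩ S' := fun hmem => hbS (Finset.mem_inter.mp hmem).1
      have hsub : insert a (insert b (S ∩ S')) ⊆ C := by
        apply Finset.insert_subset (hS haS)
        exact Finset.insert_subset (hS' hbS') ((Finset.inter_subset_left).trans hS)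
      have hcard2 : (S ∩ S').card + 2 ≤ C.card := by
        have := Finset.card_le_card hsub
        rw [Finset.card_insert_of_notMem (by
            simp only [Finset.mem_insert]
            rintro (h | h) <;> [exact hab h; exact haT h]),
          Finset.card_insert_of_notMem hbT] at this
        omega
      apply le_antisymm
      · rw [h (S ∩ S') ((Finset.inter_subset_left).trans hS) (by push_cast; omega)]
        apply Finset.le_inf
        intro x hx
        have hxC := Finset.mem_sdiff.mp hx
        have hins : insert x S ∩ insert x S' = insert x (S ∩ S') :=
          (Finset.insert_inter_distrib S S' x).symm
        have hih := ih (insert x S) (insert x S') (Finset.insert_subset hxC.1 hS)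
          (Finset.insert_subset hxC.1 hS') (by
            rw [hins, Finset.card_insert_of_notMem hxC.2]
            omega)
        rw [hins] at hih
        calc S.sup id ⊓ S'.sup id
            ≤ (insert x S).sup id ⊓ (insert x S').sup id :=
              inf_le_inf (Finset.sup_mono (Finset.subset_insert _ _))
                (Finset.sup_mono (Finset.subset_insert _ _))
          _ = (insert x (S ∩ S')).sup id := hih
      · exact le_inf (Finset.sup_mono Finset.inter_subset_left)
          (Finset.sup_mono Finset.inter_subset_right)
end

section
/- Let P be a finite poset in which every element has at most one cover (an upward-linear poset). Then in the lattice L of lower sets of P, for every cover relation a ⋖ b in L, the number of elements of L covering a is greater than or equal to the number of elements of L covering b. -/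
lemma lowerSet_covBy_iff {P : Type*} [Fintype P] [PartialOrder P] (a b : LowerSet P) :
    a ⋖ b ↔ ∃ x, x ∉ a ∧ (b : Set P) = insert x ↑a := by
  constructor
  · rintro ⟨hlt, hmax⟩
    obtain ⟨x0, hx0b, hx0a⟩ : ∃ x, x ∈ b ∧ x ∉ a := by
      by_contra h
      push_neg at h
      exact hlt.not_ge fun y hy => h y hy
    obtain ⟨x, -, hxmem, hxmin⟩ :=
      Set.Finite.exists_le_minimal (s := {y | y ∈ b ∧ y ∉ a}) (Set.toFinite _) ⟨hx0b, hx0a⟩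
    have hlow : IsLowerSet (insert x (a : Set P)) := by
      rintro u v huv (rfl | hv)
      · rcases eq_or_lt_of_le huv with rfl | hlt'
        · exact Set.mem_insert _ _
        · by_cases hva : v ∈ a
          · exact Set.mem_insert_of_mem _ hva
          · have hvb : v ∈ b := b.lower huv hxmem.1
            exact absurd (hxmin ⟨hvb, hva⟩ huv) (not_le_of_gt hlt')
      · exact Set.mem_insert_of_mem _ (a.lower huv hv)
    set S : LowerSet P := ⟨insert x (a : Set P), hlow⟩ with hS
    have haS : a < S := by
      refine lt_of_le_of_ne (fun y hy => Set.mem_insert_of_mem _ hy) ?_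
      intro h
      apply hxmem.2
      rw [h]
      show x ∈ insert x (a : Set P)
      exact Set.mem_insert _ _
    have hSb : S ≤ b := by
      rintro y (rfl | hy)
      · exact hxmem.1
      · exact hlt.le hy
    have : S = b := by
      by_contra h
      exact hmax haS (lt_of_le_of_ne hSb h)
    exact ⟨x, hxmem.2, by rw [← this]; rfl⟩
  · rintro ⟨x, hxa, hbx⟩
    have hxb : x ∈ b := by rw [← SetLike.mem_coe, hbx]; exact Set.mem_insert _ _
    have hle : a ≤ b := by
      intro y hy; rw [hbx]; exact Set.mem_insert_of_mem _ hy
    constructor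
    · exact lt_of_le_of_ne hle (by rintro rfl; exact hxa hxb)
    · intro c hac hcb
      obtain ⟨y, hyc, hya⟩ : ∃ y, y ∈ c ∧ y ∉ a := by
        by_contra h
        push_neg at h
        exact hac.not_ge fun z hz => h z hz
      have : y = x := by
        have : y ∈ (b : Set P) := hcb.le hyc
        rw [hbx] at this
        rcases this with rfl | h
        · rfl
        · exact absurd h hya
      subst this
      have : b ≤ c := by
        intro z hz
        rw [hbx] at hz
        rcases hz with rfl | hz
        · exact hyc
        · exact hac.le hz
      exact hcb.not_ge this

/-- If every element of a finite poset `P` has at most one cover, then in the lattice of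
lower sets of `P`, along every cover relation `a ⋖ b` the number of covers of `a` is at
least the number of covers of `b`. -/
theorem upwardLinear_covers_decrease (P : Type*) [Fintype P] [PartialOrder P]
    (hP : ∀ x y z : P, x ⋖ y → x ⋖ z → y = z)
    (a b : LowerSet P) (hab : a ⋖ b) :
    Nat.card {c : LowerSet P // b ⋖ c} ≤ Nat.card {c : LowerSet P // a ⋖ c} := by
  classical
  obtain ⟨x, hxa, hbx⟩ := (lowerSet_covBy_iff a b).mp hab
  -- the chosen element for each cover of b
  set Y : {c : LowerSet P // b ⋖ c} → P :=
    fun c => Classical.choose ((lowerSet_covBy_iff b c.1).mp c.2) with hY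
  have hYspec : ∀ c, Y c ∉ b ∧ (c.1 : Set P) = insert (Y c) ↑b :=
    fun c => Classical.choose_spec ((lowerSet_covBy_iff b c.1).mp c.2)
  have hYb : ∀ c, ∀ z, z < Y c → z ∈ b := by
    intro c z hz
    have hYc : Y c ∈ c.1 := by
      rw [← SetLike.mem_coe, (hYspec c).2]; exact Set.mem_insert _ _
    have hzc : z ∈ (c.1 : Set P) := c.1.lower hz.le hYc
    rw [(hYspec c).2] at hzc
    rcases hzc with rfl | h
    · exact absurd rfl hz.ne
    · exact h
  have hYa : ∀ c, ¬ x < Y c → ∀ z, z < Y c → z ∈ a := by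
    intro c hx z hz
    have hzb := hYb c z hz
    rw [← SetLike.mem_coe, hbx] at hzb
    rcases hzb with rfl | h
    · exact absurd hz hx
    · exact h
  have hxcov : ∀ c, x < Y c → x ⋖ Y c := by
    intro c hx
    refine ⟨hx, fun z hxz hzY => ?_⟩
    have hzb := hYb c z hzY
    rw [← SetLike.mem_coe, hbx] at hzb
    rcases hzb with rfl | h
    · exact hxz.ne rfl
    · exact hxa (a.lower hxz.le h)
  have hlow : ∀ c, ¬ x < Y c → IsLowerSet (insert (Y c) (a : Set P)) := by
    intro c hx
    rintro u v huv (rfl | hv)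
    · rcases eq_or_lt_of_le huv with rfl | hlt'
      · exact Set.mem_insert _ _
      · exact Set.mem_insert_of_mem _ (hYa c hx v hlt')
    · exact Set.mem_insert_of_mem _ (a.lower huv hv)
  have hYnota : ∀ c, Y c ∉ a := by
    intro c h
    exact (hYspec c).1 (hab.lt.le h)
  -- the injection
  set F : {c : LowerSet P // b ⋖ c} → {c : LowerSet P // a ⋖ c} :=
    fun c =>
      if hx : x < Y c then ⟨b, hab⟩
      else ⟨⟨insert (Y c) (a : Set P), hlow c hx⟩,
        (lowerSet_covBy_iff a _).mpr ⟨Y c, hYnota c, rfl⟩⟩ with hF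
  have hinj : Function.Injective F := by
    intro c1 c2 h
    have hYeq : Y c1 = Y c2 := by
      by_cases h1 : x < Y c1 <;> by_cases h2 : x < Y c2
      · exact hP x (Y c1) (Y c2) (hxcov c1 h1) (hxcov c2 h2)
      · exfalso
        simp only [hF, dif_pos h1, dif_neg h2] at h
        have hbcoe : (b : Set P) = insert (Y c2) (a : Set P) :=
          congrArg (fun s : {c : LowerSet P // a ⋖ c} => (s.1 : Set P)) h
        have : Y c2 ∈ (b : Set P) := by rw [hbcoe]; exact Set.mem_insert _ _
        exact (hYspec c2).1 this
      · exfalso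
        simp only [hF, dif_neg h1, dif_pos h2] at h
        have hbcoe : (b : Set P) = insert (Y c1) (a : Set P) :=
          (congrArg (fun s : {c : LowerSet P // a ⋖ c} => (s.1 : Set P)) h).symm
        have : Y c1 ∈ (b : Set P) := by rw [hbcoe]; exact Set.mem_insert _ _
        exact (hYspec c1).1 this
      · simp only [hF, dif_neg h1, dif_neg h2] at h
        have hcoe : (insert (Y c1) (a : Set P)) = insert (Y c2) (a : Set P) :=
          congrArg (fun s : {c : LowerSet P // a ⋖ c} => (s.1 : Set P)) h
        have : Y c1 ∈ insert (Y c2) (a : Set P) := by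
          rw [← hcoe]; exact Set.mem_insert _ _
        rcases this with h' | h'
        · exact h'
        · exact absurd h' (hYnota c1)
    ext1
    apply SetLike.coe_injective
    rw [(hYspec c1).2, (hYspec c2).2, hYeq]
  exact Nat.card_le_card_of_injective F hinj
end

section
/- Let P be a finite poset that is not upward-linear, i.e., some element of P has at least two covers. Then there exist lower sets a ⋖ b in the lattice L of lower sets of P (with b covering a) such that a has strictly fewer covers in L than b does. -/
open Function

section Aux

variable {P : Type*} [Fintype P] [PartialOrder P]

/-- minimal elements of the complement of a lower set -/
def MinC (A : LowerSet P) : Set P := {m | m ∉ A ∧ ∀ t, t < m → t ∈ A}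

def addMin (A : LowerSet P) (m : MinC A) : LowerSet P :=
  ⟨insert m.1 (A : Set P), by
    intro s t hts hs
    rcases hs with hs | hs
    · rcases lt_or_eq_of_le (hts.trans_eq hs) with h | h
      · exact Or.inr (m.2.2 t h)
      · exact Or.inl h
    · exact Or.inr (A.lower hts hs)⟩

lemma addMin_mem (A : LowerSet P) (m : MinC A) : m.1 ∈ addMin A m := Or.inl rfl

lemma addMin_covBy (A : LowerSet P) (m : MinC A) : A ⋖ addMin A m := by
  constructor
  · refine lt_of_le_of_ne (fun t ht => Or.inr ht) ?_
    intro h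
    have hmem := addMin_mem A m
    rw [← h] at hmem
    exact m.2.1 hmem
  · intro c hAc hc
    obtain ⟨t, htc, htA⟩ := Set.exists_of_ssubset hAc
    have htm : t = m.1 := by
      have := hc.le htc
      rcases this with h | h
      · exact h
      · exact absurd h htA
    have : (addMin A m : Set P) ⊆ c := by
      intro s hs
      rcases hs with hs | hs
      · exact hs ▸ htm ▸ htc
      · exact hAc.le hs
    exact absurd (lt_of_lt_of_le hc (by exact_mod_cast this)) (lt_irrefl _)

lemma addMin_bijective (A : LowerSet P) :
    Bijective (fun m : MinC A => (⟨addMin A m, addMin_covBy A m⟩ : {c : LowerSet P // A ⋖ c})) := by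
  constructor
  · intro m₁ m₂ h
    have h2 : addMin A m₁ = addMin A m₂ := congrArg Subtype.val h
    have hmem := addMin_mem A m₁
    rw [h2] at hmem
    rcases Set.mem_insert_iff.mp hmem with h | h
    · exact Subtype.ext h
    · exact absurd h m₁.2.1
  · rintro ⟨c, hc⟩
    have hne : ((c : Set P) \ A).Nonempty := by
      obtain ⟨t, htc, htA⟩ := Set.exists_of_ssubset hc.1
      exact ⟨t, htc, htA⟩
    obtain ⟨m, hm, hmin⟩ := (wellFounded_lt (α := P)).has_min _ hne
    have hmM : m ∈ MinC A := by
      refine ⟨hm.2, fun t ht => ?_⟩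
      by_contra htA
      exact hmin t ⟨c.lower ht.le hm.1, htA⟩ ht
    refine ⟨⟨m, hmM⟩, ?_⟩
    have hsub : (addMin A ⟨m, hmM⟩ : Set P) ⊆ c := by
      intro s hs
      rcases hs with hs | hs
      · exact hs ▸ hm.1
      · exact hc.1.le hs
    have hle : addMin A ⟨m, hmM⟩ ≤ c := by exact_mod_cast hsub
    have hlt : A < addMin A ⟨m, hmM⟩ := (addMin_covBy A ⟨m, hmM⟩).1
    rcases lt_or_eq_of_le hle with h | h
    · exact (hc.2 hlt h).elim
    · exact Subtype.ext h

lemma card_covers (A : LowerSet P) : Nat.card {c : LowerSet P // A ⋖ c} = Nat.card (MinC A) :=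
  (Nat.card_eq_of_bijective _ (addMin_bijective A)).symm

end Aux

/-- If a finite poset `P` is not upward-linear (some element has at least two covers), then
there is a cover relation `a ⋖ b` in the lattice of lower sets of `P` such that `a` has
strictly fewer covers than `b`. -/
theorem not_upwardLinear_covers_increase (P : Type*) [Fintype P] [PartialOrder P]
    (hP : ∃ x y z : P, x ⋖ y ∧ x ⋖ z ∧ y ≠ z) :
    ∃ a b : LowerSet P, a ⋖ b ∧
      Nat.card {c : LowerSet P // a ⋖ c} < Nat.card {c : LowerSet P // b ⋖ c} := by
  classical
  obtain ⟨x, y, z, hxy, hxz, hyz⟩ := hP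
  -- the big lower set b
  set bs : Set P := {t | t ≤ x ∨ (¬ x ≤ t ∧ ¬ y ≤ t ∧ ¬ z ≤ t)} with hbs
  have hbslower : IsLowerSet bs := by
    intro s t hts hs
    rcases hs with h | ⟨h1, h2, h3⟩
    · exact Or.inl (hts.trans h)
    · by_cases htx : t ≤ x
      · exact Or.inl htx
      · exact Or.inr ⟨fun h => h1 (h.trans hts), fun h => h2 (h.trans hts),
          fun h => h3 (h.trans hts)⟩
  set b : LowerSet P := ⟨bs, hbslower⟩ with hb
  have hxb : x ∈ b := Or.inl le_rfl
  -- x is maximal in b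
  have hxmax : ∀ t ∈ b, ¬ x < t := by
    rintro t (h | ⟨h1, _, _⟩) hlt
    · exact absurd (hlt.trans_le h) (lt_irrefl x)
    · exact h1 hlt.le
  set as : Set P := bs \ {x} with has
  have haslower : IsLowerSet as := by
    intro s t hts ⟨hsb, hsx⟩
    refine ⟨hbslower hts hsb, ?_⟩
    intro h
    subst h
    rcases lt_or_eq_of_le hts with h | h
    · exact hxmax s hsb h
    · exact hsx (h ▸ rfl)
  set a : LowerSet P := ⟨as, haslower⟩ with ha
  have hab : a ⋖ b := by
    constructor
    · refine lt_of_le_of_ne (fun t ht => ht.1) ?_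
      intro h
      have : x ∈ a := h ▸ hxb
      exact this.2 rfl
    · intro c hac hcb
      obtain ⟨t, htc, hta⟩ := Set.exists_of_ssubset hac
      have htb : t ∈ bs := hcb.le htc
      have htx : t = x := by
        by_contra h
        exact hta ⟨htb, h⟩
      have : (b : Set P) ⊆ c := by
        intro s hsb
        by_cases hsx : s = x
        · exact hsx ▸ htx ▸ htc
        · exact hac.le ⟨hsb, hsx⟩
      exact absurd (lt_of_lt_of_le hcb (by exact_mod_cast this)) (lt_irrefl _)
  refine ⟨a, b, hab, ?_⟩
  rw [card_covers, card_covers]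
  -- y and z are in MinC b
  have hyb : y ∈ MinC b := by
    constructor
    · rintro (h | ⟨_, h2, _⟩)
      · exact absurd (hxy.lt.trans_le h) (lt_irrefl x)
      · exact h2 le_rfl
    · intro t ht
      by_cases htx : t ≤ x
      · exact Or.inl htx
      · refine Or.inr ⟨?_, ?_, ?_⟩
        · intro h
          rcases lt_or_eq_of_le h with h' | h'
          · exact hxy.2 h' ht
          · exact htx (h' ▸ le_rfl)
        · exact fun h => absurd (h.trans_lt ht) (lt_irrefl y)
        · intro h
          have hzy : z < y := lt_of_le_of_lt h ht
          exact hxy.2 hxz.lt hzy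
  have hzb : z ∈ MinC b := by
    constructor
    · rintro (h | ⟨_, _, h3⟩)
      · exact absurd (hxz.lt.trans_le h) (lt_irrefl x)
      · exact h3 le_rfl
    · intro t ht
      by_cases htx : t ≤ x
      · exact Or.inl htx
      · refine Or.inr ⟨?_, ?_, ?_⟩
        · intro h
          rcases lt_or_eq_of_le h with h' | h'
          · exact hxz.2 h' ht
          · exact htx (h' ▸ le_rfl)
        · intro h
          have hyz' : y < z := lt_of_le_of_lt h ht
          exact hxz.2 hxy.lt hyz'
        · exact fun h => absurd (h.trans_lt ht) (lt_irrefl z)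
  -- x ∉ a, so y, z ∉ MinC a
  have hxna : x ∉ a := fun h => h.2 rfl
  have hyna : y ∉ MinC a := fun h => hxna (h.2 x hxy.lt)
  have hzna : z ∉ MinC a := fun h => hxna (h.2 x hxz.lt)
  -- injection MinC a → MinC b
  have hxMa : ∀ m ∈ MinC a, m ≠ x → m ∈ MinC b := by
    intro m hm hmx
    constructor
    · intro h
      exact hm.1 ⟨h, hmx⟩
    · intro t ht
      exact (hm.2 t ht).1
  have hyMb : y ∈ MinC b := hyb
  let f : MinC a → MinC b := fun m =>
    if h : m.1 = x then ⟨y, hyb⟩ else ⟨m.1, hxMa m.1 m.2 h⟩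
  have hfinj : Injective f := by
    intro m₁ m₂ hf
    by_cases h1 : m₁.1 = x <;> by_cases h2 : m₂.1 = x
    · exact Subtype.ext (h1.trans h2.symm)
    · exfalso
      simp only [f, dif_pos h1, dif_neg h2] at hf
      have : m₂.1 = y := (Subtype.ext_iff.mp hf).symm
      exact hyna (this ▸ m₂.2)
    · exfalso
      simp only [f, dif_neg h1, dif_pos h2] at hf
      have : m₁.1 = y := Subtype.ext_iff.mp hf
      exact hyna (this ▸ m₁.2)
    · simp only [f, dif_neg h1, dif_neg h2] at hf
      exact Subtype.ext (congrArg (fun q : MinC b => q.1) hf)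
  have hznr : (⟨z, hzb⟩ : MinC b) ∉ Set.range f := by
    rintro ⟨m, hm⟩
    by_cases h : m.1 = x
    · simp only [f, dif_pos h] at hm
      exact hyz (Subtype.ext_iff.mp hm)
    · simp only [f, dif_neg h] at hm
      have : m.1 = z := Subtype.ext_iff.mp hm
      exact hzna (this ▸ m.2)
  haveI : Fintype (MinC a) := Fintype.ofFinite _
  haveI : Fintype (MinC b) := Fintype.ofFinite _
  rw [Nat.card_eq_fintype_card, Nat.card_eq_fintype_card]
  exact Fintype.card_lt_of_injective_of_notMem f hfinj hznr
end
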